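/- Let q and k be integers with q ≥ 2 and k ≥ 2. Then there exists a connected chordal graph of order n = q(k+1) and minimum degree k whose number of edges equals q·binomial(k+1,2) + 1. -/

import Mathlib

open scoped Classical

/-- A graph is chordal if every cycle of length greater than three has a chord, i.e.,
an edge joining two vertices of the cycle that is not itself an edge of the cycle. -/
def SimpleGraph.IsChordal {V : Type*} (G : SimpleGraph V) : Prop :=
  ∀ ⦃v : V⦄ (w : G.Walk v v), w.IsCycle → 3 < w.length →
    ∃ a b : V, G.Adj a b ∧ a ∈ w.support ∧ b ∈ w.support ∧ s(a, b) ∉ w.edges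

/-!
Put `q` copies of `K_{k+1}` in a row, join consecutive copies by an edge from the last vertex of
one copy to the first vertex of the next, and inside every inner copy delete the edge between
its two link endpoints. Every vertex then has degree `k`, except the two outer link endpoints,
which have degree `k + 1`; the handshake lemma gives `q * C(k+1, 2) + 1` edges. For `k ≥ 2`
every copy keeps a vertex adjacent to the rest of the copy, so the graph is connected. The
lexicographic order of the vertices is a perfect elimination order: the later neighbours of a
vertex are either a single link neighbour or lie in its own copy, and there they are pairwise
adjacent because at most one of them is a link endpoint. Hence the graph is chordal.
-/

open Finset

namespace SimpleGraph

variable {V W α : Type*} {G : SimpleGraph V} {H : SimpleGraph W}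

theorem Walk.IsCycle.snd_penultimate_notMem_edges {u : V} {c : G.Walk u u} (hc : c.IsCycle)
    (hlen : 3 < c.length) : s(c.snd, c.penultimate) ∉ c.edges := by
  have hedges : c.edges = s(u, c.snd) :: c.tail.edges := by
    conv_lhs => rw [← c.cons_tail_eq hc.not_nil]
    rfl
  rw [hedges, List.mem_cons, not_or]
  refine ⟨fun h => ?_, fun h => ?_⟩
  · rcases Sym2.eq_iff.mp h with ⟨h1, -⟩ | ⟨-, h2⟩
    · exact (c.adj_snd hc.not_nil).ne h1.symm
    · exact (c.adj_penultimate hc.not_nil).ne h2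
  · have h2 := hc.isPath_tail.eq_snd_of_mem_edges h
    rw [Walk.snd, getVert_tail] at h2
    have := hc.getVert_injOn (by simp; omega) (by simp; omega) h2
    omega

def IsPerfectEliminationOrder [LinearOrder α] (G : SimpleGraph V) (f : V → α) : Prop :=
  Function.Injective f ∧
    ∀ u v w, f u < f v → f v < f w → G.Adj u v → G.Adj u w → G.Adj v w

theorem IsPerfectEliminationOrder.isChordal [LinearOrder α] {f : V → α}
    (hf : G.IsPerfectEliminationOrder f) : G.IsChordal := by
  intro v w hw hlen
  -- the chord joins the two cycle neighbours of the `f`-least vertex `m` of the cycle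
  obtain ⟨m, hm, hmin⟩ := w.support.toFinset.exists_min_image f ⟨v, by simp⟩
  rw [List.mem_toFinset] at hm
  set c := w.rotate m hm
  have hc : c.IsCycle := hw.rotate hm
  have hmem (i : ℕ) : c.getVert i ∈ w.support :=
    (w.mem_support_rotate_iff m hm).mp (c.getVert_mem_support i)
  have hlt (i : ℕ) (hi : G.Adj m (c.getVert i)) : f m < f (c.getVert i) :=
    (hmin _ (List.mem_toFinset.mpr (hmem i))).lt_of_ne (hf.1.ne hi.ne)
  have hsnd := c.adj_snd hc.not_nil
  have hpen := (c.adj_penultimate hc.not_nil).symm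
  refine ⟨c.snd, c.penultimate, ?_, hmem 1, hmem _, fun h => ?_⟩
  · rcases (hf.1.ne hc.snd_ne_penultimate).lt_or_gt with h | h
    · exact hf.2 _ _ _ (hlt 1 hsnd) h hsnd hpen
    · exact (hf.2 _ _ _ (hlt _ hpen) h hpen hsnd).symm
  · exact hc.snd_penultimate_notMem_edges (by simpa [c] using hlen)
      ((w.rotate_edges m hm).perm.mem_iff.mpr h)

theorem IsChordal.comap (f : H ↪g G) (hG : G.IsChordal) : H.IsChordal := by
  intro v w hw hlen
  obtain ⟨a, b, hab, ha, hb, hnab⟩ :=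
    hG (w.map f.toHom) (hw.map f.injective) (by rwa [Walk.length_map])
  rw [Walk.support_map, List.mem_map] at ha hb
  obtain ⟨x, hx, rfl⟩ := ha
  obtain ⟨y, hy, rfl⟩ := hb
  refine ⟨x, y, f.map_adj_iff.mp hab, hx, hy, fun hxy => hnab ?_⟩
  rw [Walk.edges_map]
  exact List.mem_map_of_mem hxy

theorem degree_eq_card_add_card {β γ : Type*} [Fintype β] [Fintype γ]
    {G : SimpleGraph (β × γ)} [DecidableRel G.Adj] {v : β × γ}
    (S : Finset γ) (L : Finset (β × γ)) (hL : ∀ w ∈ L, w.1 ≠ v.1)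
    (hadj : ∀ w, G.Adj v w ↔ w.1 = v.1 ∧ w.2 ∈ S ∨ w ∈ L) :
    G.degree v = #S + #L := by
  have hdisj : Disjoint ({v.1} ×ˢ S) L := Finset.disjoint_left.mpr fun w hw hwL =>
    hL w hwL (mem_singleton.mp (mem_product.mp hw).1)
  have hnbr : G.neighborFinset v = {v.1} ×ˢ S ∪ L := by
    ext w
    simp only [mem_neighborFinset, hadj, mem_union, mem_product, mem_singleton]
  rw [← card_neighborFinset_eq_degree, hnbr, card_union_of_disjoint hdisj, card_product,
    card_singleton, one_mul]

variable {q k : ℕ}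

namespace cliqueChain

def IsPort (v : Fin q × Fin (k + 1)) : Prop :=
  (0 < (v.1 : ℕ) ∧ v.2 = 0) ∨ ((v.1 : ℕ) + 1 < q ∧ v.2 = Fin.last k)

def IsLink (u v : Fin q × Fin (k + 1)) : Prop :=
  (v.1 : ℕ) = u.1 + 1 ∧ u.2 = Fin.last k ∧ v.2 = 0

end cliqueChain

open cliqueChain

/-- Row `{i} × Fin (k + 1)` is the `i`-th copy of `K_{k+1}`; the link from row `i` to row `i + 1`
is `(i, k) — (i + 1, 0)`, the ports are the endpoints of links, and the edge between the two
ports of a row is left out. -/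
def cliqueChain (q k : ℕ) : SimpleGraph (Fin q × Fin (k + 1)) :=
  fromRel fun u v => u.1 = v.1 ∧ ¬(IsPort u ∧ IsPort v) ∨ IsLink u v

theorem cliqueChain_adj {u v : Fin q × Fin (k + 1)} :
    (cliqueChain q k).Adj u v ↔
      u ≠ v ∧ (u.1 = v.1 ∧ ¬(IsPort u ∧ IsPort v) ∨ IsLink u v ∨ IsLink v u) := by
  simp only [cliqueChain, fromRel_adj, eq_comm (a := v.1), and_comm (a := IsPort v)]
  tauto

theorem cliqueChain_adj_of_not_isPort {u v : Fin q × Fin (k + 1)} (hu : ¬IsPort u)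
    (huv : u.1 = v.1) (hne : u ≠ v) : (cliqueChain q k).Adj u v :=
  cliqueChain_adj.mpr ⟨hne, Or.inl ⟨huv, fun h => hu h.1⟩⟩

theorem isPerfectEliminationOrder_toLex_cliqueChain :
    (cliqueChain q k).IsPerfectEliminationOrder toLex := by
  refine ⟨toLex.injective, fun u v w huv hvw hadj_uv hadj_uw => ?_⟩
  simp only [Prod.Lex.toLex_lt_toLex, Fin.lt_def] at huv hvw
  simp only [cliqueChain_adj, IsPort, IsLink, ne_eq, Prod.ext_iff, Fin.ext_iff,
    Fin.val_last, Fin.val_zero] at hadj_uv hadj_uw ⊢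
  omega

theorem cliqueChain_isChordal : (cliqueChain q k).IsChordal :=
  isPerfectEliminationOrder_toLex_cliqueChain.isChordal

theorem cliqueChain_connected (hq : 0 < q) (hk : 2 ≤ k) : (cliqueChain q k).Connected := by
  have : Nonempty (Fin q × Fin (k + 1)) := ⟨(⟨0, hq⟩, 0)⟩
  let centre (i : Fin q) : Fin q × Fin (k + 1) := (i, ⟨1, by omega⟩)
  have hcentre (i : Fin q) : ¬IsPort (centre i) := by
    simp [centre, IsPort, Fin.ext_iff]
    omega
  have hblock (v : Fin q × Fin (k + 1)) : (cliqueChain q k).Reachable (centre v.1) v := by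
    by_cases h : centre v.1 = v
    · rw [h]
    · exact (cliqueChain_adj_of_not_isPort (v := v) (hcentre _) rfl h).reachable
  have hchain (n : ℕ) (hn : n < q) :
      (cliqueChain q k).Reachable (centre ⟨0, hq⟩) (centre ⟨n, hn⟩) := by
    induction n with
    | zero => rfl
    | succ n ih =>
      have hlink : (cliqueChain q k).Adj (⟨n, by omega⟩, Fin.last k) (⟨n + 1, hn⟩, 0) :=
        cliqueChain_adj.mpr ⟨by simp [Fin.ext_iff], Or.inr (Or.inl ⟨rfl, rfl, rfl⟩)⟩
      exact (ih (by omega)).trans <| (hblock _).trans <| hlink.reachable.trans (hblock _).symm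
  exact ⟨fun u v => ((hchain _ u.1.2).trans (hblock u)).symm.trans
    ((hchain _ v.1.2).trans (hblock v))⟩

theorem degree_cliqueChain (hq : 2 ≤ q) (hk : 1 ≤ k) (v : Fin q × Fin (k + 1)) :
    (cliqueChain q k).degree v =
      k + (if v = (⟨0, by omega⟩, Fin.last k) then 1 else 0)
        + (if v = (⟨q - 1, by omega⟩, 0) then 1 else 0) := by
  obtain ⟨i, a⟩ := v
  suffices h : ∃ (S : Finset (Fin (k + 1))) (L : Finset (Fin q × Fin (k + 1))),
      (∀ w ∈ L, w.1 ≠ i) ∧ (∀ w, (cliqueChain q k).Adj (i, a) w ↔ w.1 = i ∧ w.2 ∈ S ∨ w ∈ L) ∧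
      #S + #L = k + (if (i, a) = (⟨0, by omega⟩, Fin.last k) then 1 else 0)
        + (if (i, a) = (⟨q - 1, by omega⟩, 0) then 1 else 0) by
    obtain ⟨S, L, hL, hadj, hcard⟩ := h
    rw [degree_eq_card_add_card S L hL hadj, hcard]
  have h0 : (0 : Fin (k + 1)) ≠ Fin.last k := by simp [Fin.ext_iff]; omega
  have hcases : ¬IsPort (i, a) ∨ (a = 0 ∧ 0 < (i : ℕ) ∧ (i : ℕ) + 1 < q) ∨
      (a = 0 ∧ 0 < (i : ℕ) ∧ (i : ℕ) + 1 = q) ∨ (a = Fin.last k ∧ 0 < (i : ℕ) ∧ (i : ℕ) + 1 < q) ∨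
      (a = Fin.last k ∧ (i : ℕ) = 0 ∧ (i : ℕ) + 1 < q) := by
    simp only [IsPort]
    omega
  rcases hcases with hport | ⟨rfl, hi⟩ | ⟨rfl, hi⟩ | ⟨rfl, hi⟩ | ⟨rfl, hi⟩ <;>
  [refine ⟨univ \ {a}, ∅, ?_, fun w => ?_, ?_⟩;
   refine ⟨univ \ {0, Fin.last k}, {(⟨i - 1, by omega⟩, Fin.last k)}, ?_, fun w => ?_, ?_⟩;
   refine ⟨univ \ {0}, {(⟨i - 1, by omega⟩, Fin.last k)}, ?_, fun w => ?_, ?_⟩;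
   refine ⟨univ \ {0, Fin.last k}, {(⟨i + 1, by omega⟩, 0)}, ?_, fun w => ?_, ?_⟩;
   refine ⟨univ \ {Fin.last k}, {(⟨i + 1, by omega⟩, 0)}, ?_, fun w => ?_, ?_⟩] <;>
  simp only [cliqueChain_adj, IsPort, IsLink, ne_eq, Prod.ext_iff, Fin.ext_iff,
    Fin.val_last, Fin.val_zero, mem_sdiff, mem_univ, mem_insert, mem_singleton, true_and,
    and_true, or_false, notMem_empty, card_sdiff_of_subset (subset_univ _), card_pair h0,
    card_univ, Fintype.card_fin, card_singleton, card_empty, IsEmpty.forall_iff,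
    implies_true] at * <;>
  (try split_ifs) <;>
  omega

theorem sum_degrees_cliqueChain (hq : 2 ≤ q) (hk : 1 ≤ k) :
    ∑ v, (cliqueChain q k).degree v = q * (k + 1) * k + 2 := by
  simp only [degree_cliqueChain hq hk, sum_add_distrib, sum_const, card_univ, Fintype.card_prod,
    Fintype.card_fin, smul_eq_mul, sum_ite_eq', mem_univ, if_true]

theorem card_edgeFinset_cliqueChain (hq : 2 ≤ q) (hk : 1 ≤ k) :
    #(cliqueChain q k).edgeFinset = q * (k + 1).choose 2 + 1 := by
  have hsum := (cliqueChain q k).sum_degrees_eq_twice_card_edges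
  have hchoose : (k + 1).choose 2 * 2 = (k + 1) * k := by
    rw [← Nat.add_one_mul_choose_eq, Nat.choose_one_right]
  rw [sum_degrees_cliqueChain hq hk] at hsum
  nlinarith

theorem minDegree_cliqueChain (hq : 2 ≤ q) (hk : 1 ≤ k) : (cliqueChain q k).minDegree = k := by
  have : Nonempty (Fin q × Fin (k + 1)) := ⟨(⟨0, by omega⟩, 0)⟩
  refine le_antisymm ?_ <| le_minDegree_of_forall_le_degree _ _ fun v => by
    rw [degree_cliqueChain hq hk]
    omega
  calc (cliqueChain q k).minDegree ≤ (cliqueChain q k).degree (⟨0, by omega⟩, 0) :=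
        minDegree_le_degree _ _
    _ = k := by
      rw [degree_cliqueChain hq hk, if_neg (by simp [Prod.ext_iff, Fin.ext_iff]; omega),
        if_neg (by simp [Prod.ext_iff, Fin.ext_iff]; omega), add_zero, add_zero]

end SimpleGraph

open SimpleGraph

/-- For integers `q ≥ 2` and `k ≥ 2`, there exists a connected chordal graph of order
`q * (k+1)` and minimum degree `k` with exactly `q * C(k+1, 2) + 1` edges. -/
theorem stmt_15 (q k : ℕ) (hq : 2 ≤ q) (hk : 2 ≤ k) :
    ∃ G : SimpleGraph (Fin (q * (k + 1))),
      G.Connected ∧ G.IsChordal ∧ G.minDegree = k ∧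
      G.edgeFinset.card = q * Nat.choose (k + 1) 2 + 1 := by
  let e := Iso.comap finProdFinEquiv.symm (cliqueChain q k)
  refine ⟨(cliqueChain q k).comap finProdFinEquiv.symm,
    e.connected_iff.mpr (cliqueChain_connected (by omega) hk),
    cliqueChain_isChordal.comap e.toEmbedding, ?_, ?_⟩
  · exact e.minDegree_eq.trans (minDegree_cliqueChain hq (by omega))
  · exact e.card_edgeFinset_eq.trans (card_edgeFinset_cliqueChain hq (by omega))
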